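/- arXiv:1207.3769 — 3 statements merged into one kernel-verified Lean document; each statement's English description precedes it below -/
import Mathlib

section
/- Let G₂ be a group and G₁ ≤ G₂ a subgroup of finite index, and let k be a commutative ring. Then the group ring inclusion k[G₁] ⊆ k[G₂] is a free id-Frobenius extension: k[G₂] is free of finite rank as a left and as a right k[G₁]-module, and k[G₂] ≅ Hom_{k[G₁]}(k[G₂], k[G₁]) as (k[G₂], k[G₁])-bimodules. -/
/-!
Choose representatives `rᵢ` of the left cosets of `G₁`. Since `rᵢ⁻¹ rⱼ ∈ G₁` only for `i = j`,
the projection `θ` satisfies `θ(rᵢ⁻¹ rⱼ) = δᵢⱼ`; since every `g` lies in exactly one coset,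
`s = ∑ ι(θ(s rᵢ)) rᵢ⁻¹ = ∑ rᵢ ι(θ(rᵢ⁻¹ s))`. Together these make `(rᵢ⁻¹)` and `(rᵢ)` a left and a
right `k[G₁]`-basis of `k[G₂]`. The Frobenius isomorphism is `s ↦ θ(· s)`, with inverse
`ψ ↦ ∑ rᵢ ι(ψ(rᵢ⁻¹))`.
-/

open MonoidAlgebra

namespace GroupRingFrobenius

variable {k : Type*} [CommRing k] {G : Type*} [Group G] {H : Subgroup G}

local notation "ι" => mapDomainRingHom k H.subtype

variable (k H) in
noncomputable def theta : MonoidAlgebra k G →+ MonoidAlgebra k H :=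
  comapDomainAddMonoidHom Subtype.val Subtype.val_injective

@[simp]
lemma coeff_theta (f : MonoidAlgebra k G) (h : H) : (theta k H f).coeff h = f.coeff h := rfl

open scoped Classical in
lemma theta_single (g : G) (c : k) :
    theta k H (single g c) = if hg : g ∈ H then single ⟨g, hg⟩ c else 0 := by
  ext h
  split_ifs with hg
  · simp [coeff_single, Finsupp.single_apply, Subtype.ext_iff]
  · simp only [coeff_theta, coeff_single, Finsupp.single_apply, coeff_zero]
    exact if_neg fun hgh : g = h => hg (hgh ▸ h.2)

open scoped Classical in
lemma coeff_iota (c : MonoidAlgebra k H) (g : G) :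
    (ι c).coeff g = if hg : g ∈ H then c.coeff ⟨g, hg⟩ else 0 := by
  split_ifs with hg
  · exact Finsupp.mapDomain_apply Subtype.val_injective c.coeff ⟨g, hg⟩
  · exact Finsupp.mapDomain_of_notMem_range _ _ (by simpa using hg)

lemma theta_iota_mul (c : MonoidAlgebra k H) (f : MonoidAlgebra k G) :
    theta k H (ι c * f) = c * theta k H f := by
  induction c using MonoidAlgebra.induction_linear with
  | zero => simp
  | add a b ha hb => rw [map_add, add_mul, map_add, add_mul, ha, hb]
  | single h c => ext h'; simp

lemma theta_mul_iota (f : MonoidAlgebra k G) (c : MonoidAlgebra k H) :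
    theta k H (f * ι c) = theta k H f * c := by
  induction c using MonoidAlgebra.induction_linear with
  | zero => simp
  | add a b ha hb => rw [map_add, mul_add, map_add, mul_add, ha, hb]
  | single h c => ext h'; simp

open scoped Classical in
lemma coeff_iota_theta (f : MonoidAlgebra k G) (g : G) :
    (ι (theta k H f)).coeff g = if g ∈ H then f.coeff g else 0 := by
  rw [coeff_iota]; rfl

variable (k H) in
noncomputable def thetaDual (s : MonoidAlgebra k G) : MonoidAlgebra k G →+ MonoidAlgebra k H :=
  (theta k H).comp (AddMonoidHom.mulRight s)

@[simp]
lemma thetaDual_apply (s t : MonoidAlgebra k G) : thetaDual k H s t = theta k H (t * s) := rfl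

lemma thetaDual_add (s t : MonoidAlgebra k G) :
    thetaDual k H (s + t) = thetaDual k H s + thetaDual k H t := by
  ext u; simp [mul_add]

lemma thetaDual_mul (s t u : MonoidAlgebra k G) :
    thetaDual k H (t * s) u = thetaDual k H s (u * t) := by
  rw [thetaDual_apply, thetaDual_apply, mul_assoc]

lemma thetaDual_iota_mul (s : MonoidAlgebra k G) (r : MonoidAlgebra k H) (t : MonoidAlgebra k G) :
    thetaDual k H s (ι r * t) = r * thetaDual k H s t := by
  rw [thetaDual_apply, thetaDual_apply, mul_assoc, theta_iota_mul]

lemma thetaDual_mul_iota (s : MonoidAlgebra k G) (r : MonoidAlgebra k H) (u : MonoidAlgebra k G) :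
    thetaDual k H (s * ι r) u = thetaDual k H s u * r := by
  rw [thetaDual_apply, thetaDual_apply, ← mul_assoc, theta_mul_iota]

section Transversal

variable {I : Type*} (e : I ≃ G ⧸ H)

noncomputable def rep (i : I) : G := (e i).out

lemma rep_inv_mul_mem_iff (i : I) (g : G) : (rep e i)⁻¹ * g ∈ H ↔ i = e.symm g := by
  rw [← QuotientGroup.eq, rep, QuotientGroup.out_eq', Equiv.eq_symm_apply]

lemma mul_rep_mem_iff (g : G) (i : I) : g * rep e i ∈ H ↔ i = e.symm ↑g⁻¹ := by
  rw [← rep_inv_mul_mem_iff, ← H.inv_mem_iff, mul_inv_rev]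

lemma rep_inv_mul_rep_mem_iff (i j : I) : (rep e i)⁻¹ * rep e j ∈ H ↔ i = j := by
  rw [rep_inv_mul_mem_iff, rep, QuotientGroup.out_eq', Equiv.symm_apply_apply]

variable [DecidableEq I]

lemma theta_single_rep_inv_mul_rep (i j : I) :
    theta k H (single ((rep e i)⁻¹ * rep e j) 1) = if i = j then 1 else 0 := by
  rw [theta_single]
  split_ifs with hmem hij hij
  · subst hij; rw [one_def]; congr 1; ext; exact inv_mul_cancel _
  · exact absurd ((rep_inv_mul_rep_mem_iff e i j).1 hmem) hij
  · exact absurd ((rep_inv_mul_rep_mem_iff e i j).2 hij) hmem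
  · rfl

variable [Fintype I]

lemma sum_iota_theta_mul_rep_mul_rep_inv (s : MonoidAlgebra k G) :
    ∑ i, ι (theta k H (s * single (rep e i) 1)) * single (rep e i)⁻¹ 1 = s := by
  ext g
  simp only [coeff_sum, Finsupp.finsetSum_apply, coeff_mul_single_apply, inv_inv, mul_one,
    coeff_iota_theta, mul_rep_mem_iff, mul_inv_cancel_right, Finset.sum_ite_eq', Finset.mem_univ,
    if_true]

lemma sum_rep_mul_iota_theta_rep_inv_mul (s : MonoidAlgebra k G) :
    ∑ i, single (rep e i) 1 * ι (theta k H (single (rep e i)⁻¹ 1 * s)) = s := by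
  ext g
  simp only [coeff_sum, Finsupp.finsetSum_apply, coeff_single_mul_apply, one_mul, inv_inv,
    coeff_iota_theta, rep_inv_mul_mem_iff, mul_inv_cancel_left, Finset.sum_ite_eq', Finset.mem_univ,
    if_true]

lemma theta_sum_iota_mul_rep_inv_mul_rep (c : I → MonoidAlgebra k H) (j : I) :
    theta k H ((∑ i, ι (c i) * single (rep e i)⁻¹ 1) * single (rep e j) 1) = c j := by
  simp only [Finset.sum_mul, map_sum, mul_assoc, single_mul_single, theta_iota_mul,
    theta_single_rep_inv_mul_rep, mul_ite, mul_one, mul_zero, Finset.sum_ite_eq',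
    Finset.mem_univ, if_true]

lemma theta_rep_inv_mul_sum_rep_mul_iota (c : I → MonoidAlgebra k H) (j : I) :
    theta k H (single (rep e j)⁻¹ 1 * ∑ i, single (rep e i) 1 * ι (c i)) = c j := by
  simp only [Finset.mul_sum, map_sum, ← mul_assoc, single_mul_single, one_mul, theta_mul_iota,
    theta_single_rep_inv_mul_rep, ite_mul, one_mul, zero_mul, Finset.sum_ite_eq,
    Finset.mem_univ, if_true]

lemma existsUnique_eq_sum_iota_mul_rep_inv (s : MonoidAlgebra k G) :
    ∃! c : I → MonoidAlgebra k H, s = ∑ i, ι (c i) * single (rep e i)⁻¹ 1 := by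
  refine ⟨fun i => theta k H (s * single (rep e i) 1),
    (sum_iota_theta_mul_rep_mul_rep_inv e s).symm, fun c hc => funext fun j => ?_⟩
  rw [hc, theta_sum_iota_mul_rep_inv_mul_rep]

lemma existsUnique_eq_sum_rep_mul_iota (s : MonoidAlgebra k G) :
    ∃! c : I → MonoidAlgebra k H, s = ∑ i, single (rep e i) 1 * ι (c i) := by
  refine ⟨fun i => theta k H (single (rep e i)⁻¹ 1 * s),
    (sum_rep_mul_iota_theta_rep_inv_mul e s).symm, fun c hc => funext fun j => ?_⟩
  rw [hc, theta_rep_inv_mul_sum_rep_mul_iota]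

lemma apply_eq_sum_theta_mul_rep_mul (ψ : MonoidAlgebra k G →+ MonoidAlgebra k H)
    (hψ : ∀ r t, ψ (ι r * t) = r * ψ t) (t : MonoidAlgebra k G) :
    ψ t = ∑ i, theta k H (t * single (rep e i) 1) * ψ (single (rep e i)⁻¹ 1) := by
  conv_lhs => rw [← sum_iota_theta_mul_rep_mul_rep_inv e t]
  simp only [map_sum, hψ]

end Transversal

lemma existsUnique_thetaDual_eq [H.FiniteIndex] (ψ : MonoidAlgebra k G →+ MonoidAlgebra k H)
    (hψ : ∀ r t, ψ (ι r * t) = r * ψ t) : ∃! s, thetaDual k H s = ψ := by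
  let e := (Finite.equivFin (G ⧸ H)).symm
  refine ⟨∑ i, single (rep e i) 1 * ι (ψ (single (rep e i)⁻¹ 1)), ?_, ?_⟩
  · refine AddMonoidHom.ext fun t => ?_
    rw [apply_eq_sum_theta_mul_rep_mul e _ (thetaDual_iota_mul _),
      apply_eq_sum_theta_mul_rep_mul e ψ hψ]
    simp only [thetaDual_apply, theta_rep_inv_mul_sum_rep_mul_iota]
  · rintro s rfl
    exact (sum_rep_mul_iota_theta_rep_inv_mul e s).symm

end GroupRingFrobenius

open GroupRingFrobenius

/-- let `G₁ ≤ G₂` be a subgroup of finite index and `k` a commutative ring.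
Then `k[G₁] ⊆ k[G₂]` is a free `id`-Frobenius extension: `k[G₂]` is free of finite rank as a
left and as a right `k[G₁]`-module, and `k[G₂] ≅ Hom_{k[G₁]}(k[G₂], k[G₁])` as
`(k[G₂], k[G₁])`-bimodules. -/
theorem stmt12 (k : Type) [CommRing k] (G₂ : Type) [Group G₂] (G₁ : Subgroup G₂)
    (hfin : G₁.index ≠ 0) :
    ∃ (n : ℕ) (x y : Fin n → MonoidAlgebra k G₂),
      (∀ s : MonoidAlgebra k G₂, ∃! c : Fin n → MonoidAlgebra k G₁,
        s = ∑ i, (MonoidAlgebra.mapDomainRingHom k G₁.subtype) (c i) * x i) ∧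
      (∀ s : MonoidAlgebra k G₂, ∃! c : Fin n → MonoidAlgebra k G₁,
        s = ∑ i, y i * (MonoidAlgebra.mapDomainRingHom k G₁.subtype) (c i)) ∧
      ∃ Φ : MonoidAlgebra k G₂ → (MonoidAlgebra k G₂ →+ MonoidAlgebra k G₁),
        (∀ (s : MonoidAlgebra k G₂) (r : MonoidAlgebra k G₁) (t : MonoidAlgebra k G₂),
          Φ s ((MonoidAlgebra.mapDomainRingHom k G₁.subtype) r * t) = r * Φ s t) ∧
        (∀ ψ : MonoidAlgebra k G₂ →+ MonoidAlgebra k G₁,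
          (∀ (r : MonoidAlgebra k G₁) (t : MonoidAlgebra k G₂),
            ψ ((MonoidAlgebra.mapDomainRingHom k G₁.subtype) r * t) = r * ψ t) →
          ∃! s : MonoidAlgebra k G₂, Φ s = ψ) ∧
        (∀ s t : MonoidAlgebra k G₂, Φ (s + t) = Φ s + Φ t) ∧
        (∀ s t u : MonoidAlgebra k G₂, Φ (t * s) u = Φ s (u * t)) ∧
        (∀ (s : MonoidAlgebra k G₂) (r : MonoidAlgebra k G₁) (u : MonoidAlgebra k G₂),
          Φ (s * (MonoidAlgebra.mapDomainRingHom k G₁.subtype) r) u = Φ s u * r) := by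
  have : G₁.FiniteIndex := ⟨hfin⟩
  let e := (Finite.equivFin (G₂ ⧸ G₁)).symm
  exact ⟨_, fun i => single (rep e i)⁻¹ 1, fun i => single (rep e i) 1,
    existsUnique_eq_sum_iota_mul_rep_inv e, existsUnique_eq_sum_rep_mul_iota e,
    thetaDual k G₁, thetaDual_iota_mul, existsUnique_thetaDual_eq, thetaDual_add, thetaDual_mul,
    thetaDual_mul_iota⟩
end

section
/- Let W be a finite Coxeter group with longest element w₀ and Bruhat order ≤, and let H be its Iwahori–Hecke algebra over a field k with parameter q, with basis (T_w). Let δ : H → k be the linear form sending Σ a_w T_w to a_{w₀}. Then for all v, w ∈ W: δ(T_w · T_{w⁻¹w₀}) = 1, and δ(T_v · T_{w⁻¹w₀}) = 0 unless w ≤ v in the Bruhat order. In particular, the matrix (δ(T_v T_{w⁻¹w₀}))_{v,w∈W} is invertible (lower unitriangular with respect to Bruhat order), and H is a Frobenius algebra with Frobenius form δ. -/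
/-- The Bruhat order on a Coxeter group: `w ≤ v` iff some reduced word for `v` contains a
subword whose product is `w`. -/
def BruhatLE {B W : Type} [Group W] {M : CoxeterMatrix B} (cs : CoxeterSystem M W)
    (w v : W) : Prop :=
  ∃ l l' : List B, cs.wordProd l = v ∧ l.length = cs.length v ∧
    l'.Sublist l ∧ cs.wordProd l' = w

/-!
The diagonal entries come from `ℓ w + ℓ (w⁻¹ w₀) = ℓ w₀`, i.e. `T_w T_{w⁻¹w₀} = T_{w₀}`.
This is proved with the reflection cocycle: `W` acts on `W × ZMod 2` by
`s_i • (t, e) = (s_i t s_i, e + [t = s_i])`, and the second coordinate `η(w, t)` (`invParity`)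
of `w • (t, 0)` is the parity of the number of occurrences of `t` in the right inversion
sequence of any word for `w`. For a reduced word this is `1` exactly on the right inversions,
so `ℓ w = ∑ₜ η(w, t)`. Every reflection is an inversion of `w₀`, so for `w₀ = u b` the cocycle
identity `η(u b, t) = η(b, t) + η(u, b t b⁻¹)` splits the reflections into the inversions of
`b` and the `b`-conjugates of the inversions of `u`.

For the vanishing entries, expanding `T_v T_x` along a reduced word of `v` with the quadratic
relation only produces terms `T_{π ω' x}` with `ω'` a subword. Hence the Gram matrix of
`(a, b) ↦ δ(ab)` in the basis `T` is, up to a permutation of columns, unitriangular with respect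
to length, and the form is nondegenerate.
-/

open List

theorem List.count_eq_count_take_add_count_take {α : Type*} [BEq α] (L : List α) (m : ℕ)
    (hlen : L.length = 2 * m) (hper : ∀ k (hk : k < m), L[m + k] = L[k]) (a : α) :
    L.count a = (L.take m).count a + (L.take m).count a := by
  have hdrop : L.drop m = L.take m := by
    refine ext_getElem (by simp; omega) fun k hk _ => ?_
    simp only [getElem_drop, getElem_take]
    exact hper k (by simp at hk; omega)
  conv_lhs => rw [← take_append_drop m L, hdrop, count_append]

theorem Matrix.det_eq_one_of_unitriangular {m α R : Type*} [Fintype m] [DecidableEq m]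
    [CommRing R] [LinearOrder α] {A : Matrix m m R} (b : m → α) (hdiag : ∀ i, A i i = 1)
    (hlower : ∀ i j, i ≠ j → b i ≤ b j → A i j = 0) : A.det = 1 := by
  have hA : A.BlockTriangular (OrderDual.toDual ∘ b) := fun i j hij =>
    hlower i j (by rintro rfl; exact lt_irrefl _ hij) hij.le
  rw [hA.det]
  refine Finset.prod_eq_one fun a _ => ?_
  have hblock : A.toSquareBlock (OrderDual.toDual ∘ b) a = 1 := by
    ext ⟨i, hi⟩ ⟨j, hj⟩
    by_cases hij : i = j
    · subst hij
      simp [toSquareBlock_def, hdiag]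
    · simp only [toSquareBlock_def, of_apply, one_apply, Subtype.mk.injEq, hij, if_false]
      exact hlower i j hij (le_of_eq (hi.trans hj.symm))
  rw [hblock, det_one]

theorem LinearMap.nondegenerate_mul_compr₂_of_isUnit {ι k A : Type*} [Fintype ι] [DecidableEq ι]
    [CommRing k] [IsDomain k] [Ring A] [Algebra k A] (T : Module.Basis ι k A) (δ : A →ₗ[k] k)
    (e : ι ≃ ι) (h : IsUnit (Matrix.of fun i j => δ (T i * T (e j)))) :
    ((LinearMap.mul k A).compr₂ δ).Nondegenerate := by
  refine nondegenerate_of_det_ne_zero T ?_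
  have hgram : Matrix.of (fun i j => δ (T i * T (e j)))
      = (toMatrix₂ T T ((LinearMap.mul k A).compr₂ δ)).submatrix (Equiv.refl ι) e := by
    ext i j
    simp [toMatrix₂_apply]
  rw [hgram, Matrix.isUnit_submatrix_equiv, Matrix.isUnit_iff_isUnit_det] at h
  exact h.ne_zero

theorem BruhatLE.eq_or_length_lt {B W : Type} [Group W] {M : CoxeterMatrix B}
    {cs : CoxeterSystem M W} {w v : W} (h : BruhatLE cs w v) :
    w = v ∨ cs.length w < cs.length v := by
  obtain ⟨ω, ω', rfl, hω, hsub, rfl⟩ := h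
  by_cases hω' : ω' = ω
  · exact Or.inl (by rw [hω'])
  · refine Or.inr (lt_of_le_of_lt (cs.length_wordProd_le ω') ?_)
    rw [← hω]
    exact lt_of_le_of_ne hsub.length_le fun hlen => hω' (hsub.eq_of_length hlen)

namespace CoxeterSystem

variable {B W : Type*} [Group W] {M : CoxeterMatrix B} (cs : CoxeterSystem M W)

local prefix:100 "s" => cs.simple
local prefix:100 "π" => cs.wordProd
local prefix:100 "ℓ" => cs.length
local prefix:100 "ris " => cs.rightInvSeq
local prefix:100 "lis " => cs.leftInvSeq

theorem rightInvSeq_eq_map_leftInvSeq (ω : List B) :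
    ris ω = (lis ω).map (MulAut.conj (π ω)⁻¹) := by
  induction ω with
  | nil => rfl
  | cons i ω ih =>
    simp only [rightInvSeq, leftInvSeq, ih, map_cons, map_map, wordProd_cons, mul_inv_rev,
      inv_simple, cons.injEq]
    constructor
    · simp [mul_assoc]
    · congr 1
      ext t
      simp [mul_assoc]

theorem prod_map_alternatingWord_two_mul {G : Type*} [Monoid G] (f : B → G) (i i' : B) (m : ℕ) :
    ((alternatingWord i i' (2 * m)).map f).prod = (f i * f i') ^ m := by
  induction m with
  | zero => simp [alternatingWord]
  | succ m ih =>
    rw [show 2 * (m + 1) = 2 * m + 1 + 1 by ring, alternatingWord_succ', alternatingWord_succ',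
      if_neg (by simp [parity_simps]), if_pos (even_two_mul m), map_cons, map_cons, prod_cons,
      prod_cons, ih, pow_succ', mul_assoc]

section ReflectionCocycle

variable [DecidableEq W]

/-- Since `π = 1` on the braid relator `(s_i s_i')^m`, its right and left inversion sequences
agree, and the latter, `k ↦ s_i (s_i' s_i)^k`, has period `m`. -/
theorem natCast_count_rightInvSeq_braid (i i' : B) (t : W) :
    ((ris (alternatingWord i i' (2 * M i i'))).count t : ZMod 2) = 0 := by
  have hprod : π (alternatingWord i i' (2 * M i i')) = 1 := by
    rw [prod_alternatingWord_eq_mul_pow, if_pos (even_two_mul _),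
      Nat.mul_div_cancel_left _ two_pos, one_mul, simple_mul_simple_pow]
  have hlis (k : ℕ) (hk : k < 2 * M i i') :
      (lis (alternatingWord i i' (2 * M i i')))[k]'(by simpa using hk)
        = s i * (s i' * s i) ^ k := by
    rw [getElem_leftInvSeq_alternatingWord cs i i' _ k hk, prod_alternatingWord_eq_mul_pow,
      if_neg (by simp [parity_simps]), show (2 * k + 1) / 2 = k by omega]
  have hper (k : ℕ) (hk : k < M i i') :
      (lis (alternatingWord i i' (2 * M i i')))[M i i' + k]'(by simp; omega)
        = (lis (alternatingWord i i' (2 * M i i')))[k]'(by simp; omega) := by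
    rw [hlis _ (by omega), hlis _ (by omega), pow_add, M.symmetric, simple_mul_simple_pow, one_mul]
  rw [rightInvSeq_eq_map_leftInvSeq, hprod, inv_one, map_one, MulAut.one_def, MulEquiv.coe_refl,
    map_id, count_eq_count_take_add_count_take _ _ (by simp) hper, Nat.cast_add,
    CharTwo.add_self_eq_zero]

def simplePerm (i : B) : Equiv.Perm (W × ZMod 2) :=
  Function.Involutive.toPerm (fun x => (s i * x.1 * s i, x.2 + if x.1 = s i then 1 else 0)) <| by
    rintro ⟨t, e⟩
    have hfix : s i * t * s i = s i ↔ t = s i := by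
      constructor
      · intro h
        simpa [mul_assoc] using congrArg (fun z => s i * z * s i) h
      · rintro rfl
        simp
    refine Prod.ext (by simp [mul_assoc]) ?_
    dsimp only
    simp_rw [hfix, add_assoc]
    split_ifs <;> simp [CharTwo.add_self_eq_zero]

theorem simplePerm_apply (i : B) (t : W) (e : ZMod 2) :
    cs.simplePerm i (t, e) = (s i * t * s i, e + if t = s i then 1 else 0) := rfl

theorem prod_map_simplePerm_apply (ω : List B) (t : W) (e : ZMod 2) :
    (ω.map cs.simplePerm).prod (t, e)
      = (π ω * t * (π ω)⁻¹, e + ((ris ω).count t : ZMod 2)) := by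
  induction ω generalizing t e with
  | nil => simp
  | cons i ω ih =>
    have hfix : π ω * t * (π ω)⁻¹ = s i ↔ (π ω)⁻¹ * s i * π ω = t := by
      constructor <;> intro h <;> rw [← h] <;> group
    rw [map_cons, prod_cons, Equiv.Perm.mul_apply, ih, simplePerm_apply, wordProd_cons,
      rightInvSeq, count_cons]
    refine Prod.ext (by simp [mul_assoc]) ?_
    simp_rw [hfix, beq_iff_eq]
    split_ifs <;> simp [add_assoc]

theorem isLiftable_simplePerm : M.IsLiftable cs.simplePerm := by
  intro i i'
  ext ⟨t, e⟩ : 1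
  rw [← prod_map_alternatingWord_two_mul, prod_map_simplePerm_apply,
    natCast_count_rightInvSeq_braid, prod_alternatingWord_eq_mul_pow, if_pos (even_two_mul _),
    Nat.mul_div_cancel_left _ two_pos, one_mul, simple_mul_simple_pow]
  simp

noncomputable def reflRep : W →* Equiv.Perm (W × ZMod 2) :=
  cs.lift ⟨cs.simplePerm, cs.isLiftable_simplePerm⟩

noncomputable def invParity (w t : W) : ZMod 2 := (cs.reflRep w (t, 0)).2

theorem reflRep_wordProd_apply (ω : List B) (t : W) (e : ZMod 2) :
    cs.reflRep (π ω) (t, e) = (π ω * t * (π ω)⁻¹, e + ((ris ω).count t : ZMod 2)) := by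
  rw [← prod_map_simplePerm_apply, wordProd, map_list_prod, map_map]
  congr 3
  funext i
  exact cs.lift_apply_simple cs.isLiftable_simplePerm i

theorem invParity_wordProd (ω : List B) (t : W) :
    cs.invParity (π ω) t = (ris ω).count t := by
  simp [invParity, reflRep_wordProd_apply]

theorem reflRep_apply (w t : W) (e : ZMod 2) :
    cs.reflRep w (t, e) = (w * t * w⁻¹, e + cs.invParity w t) := by
  obtain ⟨ω, -, rfl⟩ := cs.exists_isReduced w
  rw [reflRep_wordProd_apply, invParity_wordProd]

theorem invParity_mul (u v t : W) :
    cs.invParity (u * v) t = cs.invParity v t + cs.invParity u (v * t * v⁻¹) := by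
  have h := cs.reflRep_apply (u * v) t 0
  rw [map_mul, Equiv.Perm.mul_apply, reflRep_apply, reflRep_apply] at h
  simpa using (congrArg Prod.snd h).symm

theorem invParity_one (t : W) : cs.invParity 1 t = 0 := by
  simp [invParity]

theorem invParity_simple_self (i : B) : cs.invParity (s i) (s i) = 1 := by
  simpa using cs.invParity_wordProd [i] (s i)

theorem invParity_of_not_isReflection {t : W} (ht : ¬cs.IsReflection t) (w : W) :
    cs.invParity w t = 0 := by
  obtain ⟨ω, -, rfl⟩ := cs.exists_isReduced w
  rw [invParity_wordProd,
    count_eq_zero_of_not_mem fun h => ht (cs.isReflection_of_mem_rightInvSeq ω h), Nat.cast_zero]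

theorem invParity_self {t : W} (ht : cs.IsReflection t) : cs.invParity t t = 1 := by
  obtain ⟨u, i, rfl⟩ := ht
  -- expand `η(t, t)` along `t = (u s_i) u⁻¹`, and `0 = η(1, t)` along `1 = u u⁻¹`
  have hconj : u⁻¹ * (u * s i * u⁻¹) * u⁻¹⁻¹ = s i := by group
  have h₁ := cs.invParity_mul (u * s i) u⁻¹ (u * s i * u⁻¹)
  have h₂ := cs.invParity_mul u (s i) (s i)
  have h₃ := cs.invParity_mul u u⁻¹ (u * s i * u⁻¹)
  rw [hconj] at h₁ h₃
  rw [mul_inv_cancel, invParity_one] at h₃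
  rw [simple_mul_simple_self, one_mul, inv_simple, invParity_simple_self] at h₂
  rw [h₁, h₂]
  linear_combination -h₃

theorem length_mul_lt_of_invParity_eq_one {w t : W} (h : cs.invParity w t = 1) :
    ℓ (w * t) < ℓ w := by
  obtain ⟨ω, hω, rfl⟩ := cs.exists_isReduced w
  rw [invParity_wordProd] at h
  have hmem : t ∈ ris ω := by
    by_contra hmem
    simp [count_eq_zero_of_not_mem hmem] at h
  exact (cs.isRightInversion_of_mem_rightInvSeq hω hmem).2

theorem invParity_eq_one_iff {t : W} (ht : cs.IsReflection t) (w : W) :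
    cs.invParity w t = 1 ↔ ℓ (w * t) < ℓ w := by
  refine ⟨cs.length_mul_lt_of_invParity_eq_one, fun hlt => ?_⟩
  by_contra hne
  have h0 : cs.invParity w t = 0 := by
    generalize cs.invParity w t = x at hne
    revert x
    decide
  have h : cs.invParity (w * t) t = 1 := by
    rw [invParity_mul, invParity_self cs ht, mul_inv_cancel_right, h0, add_zero]
  have := cs.length_mul_lt_of_invParity_eq_one h
  rw [mul_assoc, ht.mul_self, mul_one] at this
  omega

theorem length_eq_sum_val_invParity [Fintype W] (w : W) :
    ℓ w = ∑ t, (cs.invParity w t).val := by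
  obtain ⟨ω, hω, rfl⟩ := cs.exists_isReduced w
  have hval (t : W) : (cs.invParity (π ω) t).val = (ris ω).count t := by
    rw [invParity_wordProd, ZMod.val_natCast]
    exact Nat.mod_eq_of_lt (Nat.lt_succ_of_le (nodup_iff_count_le_one.1 hω.nodup_rightInvSeq t))
  simp_rw [hval]
  rw [hω.eq, ← cs.length_rightInvSeq, ← sum_toFinset_count_eq_length]
  exact Finset.sum_subset (Finset.subset_univ _) fun t _ ht =>
    count_eq_zero_of_not_mem (by simpa using ht)

omit [DecidableEq W] in
theorem length_add_length_inv_mul_of_forall_length_le [Fintype W] {w₀ : W}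
    (hw₀ : ∀ w, ℓ w ≤ ℓ w₀) (u : W) : ℓ u + ℓ (u⁻¹ * w₀) = ℓ w₀ := by
  classical
  set b := u⁻¹ * w₀
  have hval (t : W) :
      (cs.invParity b t).val + (cs.invParity u (b * t * b⁻¹)).val = (cs.invParity w₀ t).val := by
    by_cases ht : cs.IsReflection t
    · have h₀ : cs.invParity w₀ t = 1 :=
        (cs.invParity_eq_one_iff ht w₀).2 (lt_of_le_of_ne (hw₀ _) (ht.length_mul_left_ne w₀))
      have hsum : cs.invParity b t + cs.invParity u (b * t * b⁻¹) = 1 := by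
        rw [← invParity_mul, mul_inv_cancel_left, h₀]
      rw [h₀]
      generalize cs.invParity b t = x at hsum
      generalize cs.invParity u (b * t * b⁻¹) = y at hsum
      revert x y
      decide
    · have ht' : ¬cs.IsReflection (b * t * b⁻¹) := by rwa [isReflection_conj_iff]
      simp [invParity_of_not_isReflection, ht, ht']
  calc ℓ u + ℓ b = ∑ t, (cs.invParity b t).val + ∑ t, (cs.invParity u (b * t * b⁻¹)).val := by
        rw [add_comm, length_eq_sum_val_invParity, length_eq_sum_val_invParity]
        congr 1
        exact ((MulAut.conj b).toEquiv.sum_comp fun t => (cs.invParity u t).val).symm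
    _ = ℓ w₀ := by
      rw [← Finset.sum_add_distrib, length_eq_sum_val_invParity]
      exact Finset.sum_congr rfl fun t _ => hval t

end ReflectionCocycle

section Hecke

variable {k H : Type*} [CommRing k] [Ring H] [Algebra k H]

structure IsHeckeBasis (q : k) (T : Module.Basis W k H) : Prop where
  mul_of_length_add : ∀ v w : W, ℓ (v * w) = ℓ v + ℓ w → T v * T w = T (v * w)
  simple_mul_self : ∀ i : B, T (s i) * T (s i) = (q - 1) • T (s i) + q • (1 : H)

variable {cs} {q : k} {T : Module.Basis W k H}

theorem IsHeckeBasis.simple_mul_mem_span (hT : cs.IsHeckeBasis q T) (i : B) (x : W) :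
    T (s i) * T x ∈ Submodule.span k {T x, T (s i * x)} := by
  rcases cs.length_simple_mul x i with hlong | hshort
  · rw [hT.mul_of_length_add _ _ (by rw [hlong, length_simple, add_comm])]
    exact Submodule.subset_span (Set.mem_insert_of_mem _ rfl)
  · have hx : T (s i) * T (s i * x) = T x := by
      rw [hT.mul_of_length_add _ _ (by rw [simple_mul_simple_cancel_left, length_simple]; omega),
        simple_mul_simple_cancel_left]
    rw [← hx, ← mul_assoc, hT.simple_mul_self, add_mul, smul_mul_assoc, smul_mul_assoc, one_mul,
      hx]
    exact Submodule.add_mem _ (Submodule.smul_mem _ _ (Submodule.subset_span (by simp)))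
      (Submodule.smul_mem _ _ (Submodule.subset_span (by simp)))

theorem IsHeckeBasis.wordProd_mul_mem_span (hT : cs.IsHeckeBasis q T) {ω : List B}
    (hω : cs.IsReduced ω) (u : W) :
    T (π ω) * T u ∈ Submodule.span k {T (π ω' * u) | (ω' : List B) (_ : ω'.Sublist ω)} := by
  induction ω with
  | nil =>
    rw [wordProd_nil, hT.mul_of_length_add _ _ (by simp)]
    exact Submodule.subset_span ⟨[], Sublist.slnil, rfl⟩
  | cons i ω ih =>
    have hω' : cs.IsReduced ω := by simpa using hω.drop 1
    have hsplit : T (π (i :: ω)) = T (s i) * T (π ω) := by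
      rw [wordProd_cons, hT.mul_of_length_add _ _ (by
        rw [← wordProd_cons, hω.eq, hω'.eq, length_simple, length_cons, add_comm])]
    have hmap : Submodule.span k {T (π ω' * u) | (ω' : List B) (_ : ω'.Sublist ω)}
        ≤ (Submodule.span k {T (π ω' * u) | (ω' : List B) (_ : ω'.Sublist (i :: ω))}).comap
          (LinearMap.mulLeft k (T (s i))) := by
      rw [Submodule.span_le]
      rintro _ ⟨ω', hω', rfl⟩
      refine Submodule.span_mono ?_ (hT.simple_mul_mem_span i (π ω' * u))
      rintro _ (rfl | rfl)
      · exact ⟨ω', hω'.cons i, rfl⟩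
      · exact ⟨i :: ω', hω'.cons_cons i, by rw [wordProd_cons, mul_assoc]⟩
    rw [hsplit, mul_assoc]
    exact hmap (ih hω')

theorem IsHeckeBasis.mul_inv_mul_eq [Fintype W] (hT : cs.IsHeckeBasis q T) {w₀ : W}
    (hw₀ : ∀ w, ℓ w ≤ ℓ w₀) (w : W) : T w * T (w⁻¹ * w₀) = T w₀ := by
  rw [hT.mul_of_length_add _ _ (by
    rw [mul_inv_cancel_left, cs.length_add_length_inv_mul_of_forall_length_le hw₀]),
    mul_inv_cancel_left]

theorem IsHeckeBasis.repr_wordProd_mul_eq_zero (hT : cs.IsHeckeBasis q T) {ω : List B}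
    (hω : cs.IsReduced ω) {x y : W} (hy : ∀ ω', ω'.Sublist ω → π ω' * x ≠ y) :
    T.repr (T (π ω) * T x) y = 0 := by
  have hker : Submodule.span k {T (π ω' * x) | (ω' : List B) (_ : ω'.Sublist ω)}
      ≤ LinearMap.ker (T.coord y) := by
    rw [Submodule.span_le]
    rintro _ ⟨ω', hω', rfl⟩
    simp [Finsupp.single_eq_of_ne (hy ω' hω').symm]
  exact hker (hT.wordProd_mul_mem_span hω x)

end Hecke

end CoxeterSystem

theorem CoxeterSystem.IsHeckeBasis.repr_mul_eq_zero_of_not_bruhatLE {B W : Type} [Group W]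
    {M : CoxeterMatrix B} {cs : CoxeterSystem M W} {k H : Type*} [CommRing k] [Ring H]
    [Algebra k H] {q : k} {T : Module.Basis W k H} (hT : cs.IsHeckeBasis q T) {v w : W}
    (h : ¬BruhatLE cs w v) (w₀ : W) : T.repr (T v * T (w⁻¹ * w₀)) w₀ = 0 := by
  obtain ⟨ω, hω, rfl⟩ := cs.exists_isReduced v
  refine hT.repr_wordProd_mul_eq_zero hω fun ω' hω' heq => h ⟨ω, ω', rfl, hω.symm, hω', ?_⟩
  simpa [← mul_assoc, mul_inv_eq_one] using heq

theorem stmt13_general {B W : Type} [Group W] [Fintype W] [DecidableEq W] {M : CoxeterMatrix B}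
    (cs : CoxeterSystem M W)
    (k : Type) [Field k] (q : k) (H : Type) [Ring H] [Algebra k H]
    (T : Module.Basis W k H)
    (hbraid : ∀ v w : W,
      cs.length (v * w) = cs.length v + cs.length w → T v * T w = T (v * w))
    (hquad : ∀ i : B,
      T (cs.simple i) * T (cs.simple i) = (q - 1) • T (cs.simple i) + q • (1 : H))
    (w₀ : W) (hw₀ : ∀ w : W, cs.length w ≤ cs.length w₀) :
    (∀ w : W, T.repr (T w * T (w⁻¹ * w₀)) w₀ = 1) ∧
      (∀ v w : W, ¬ BruhatLE cs w v → T.repr (T v * T (w⁻¹ * w₀)) w₀ = 0) ∧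
      IsUnit (Matrix.of fun v w : W => T.repr (T v * T (w⁻¹ * w₀)) w₀) ∧
      (∀ a : H, (∀ b : H, T.repr (a * b) w₀ = 0) → a = 0) ∧
      (∀ b : H, (∀ a : H, T.repr (a * b) w₀ = 0) → b = 0) := by
  have hT : cs.IsHeckeBasis q T := ⟨hbraid, hquad⟩
  have hdiag (w : W) : T.repr (T w * T (w⁻¹ * w₀)) w₀ = 1 := by
    rw [hT.mul_inv_mul_eq hw₀, T.repr_self, Finsupp.single_eq_same]
  have hvan (v w : W) (h : ¬BruhatLE cs w v) : T.repr (T v * T (w⁻¹ * w₀)) w₀ = 0 :=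
    hT.repr_mul_eq_zero_of_not_bruhatLE h w₀
  have hunit : IsUnit (Matrix.of fun v w : W => T.repr (T v * T (w⁻¹ * w₀)) w₀) := by
    have hdet : (Matrix.of fun v w : W => T.repr (T v * T (w⁻¹ * w₀)) w₀).det = 1 :=
      Matrix.det_eq_one_of_unitriangular cs.length hdiag fun v w hne hle => hvan v w fun hwv =>
        hwv.eq_or_length_lt.elim (fun h => hne h.symm) fun h => (not_le.2 h) hle
    rw [Matrix.isUnit_iff_isUnit_det, hdet]
    exact isUnit_one
  have hB := LinearMap.nondegenerate_mul_compr₂_of_isUnit T (T.coord w₀)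
    ((Equiv.inv W).trans (Equiv.mulRight w₀)) hunit
  exact ⟨hdiag, hvan, hunit, hB.1, hB.2⟩

/-- let `W` be a finite Coxeter group with longest element `w₀`, `H` its
Iwahori–Hecke algebra over a field `k` with parameter `q`, and `δ : H → k` the linear form
picking the coefficient of `T_{w₀}`.  Then `δ(T_w T_{w⁻¹w₀}) = 1` for all `w`, and
`δ(T_v T_{w⁻¹w₀}) = 0` unless `w ≤ v` in the Bruhat order; in particular the matrix
`(δ(T_v T_{w⁻¹w₀}))_{v,w}` is invertible and `H` is a Frobenius algebra with Frobenius
form `δ` (the bilinear form `(a,b) ↦ δ(ab)` is nondegenerate). -/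
theorem stmt13 {B W : Type} [Group W] [Fintype W] [DecidableEq W] {M : CoxeterMatrix B}
    (cs : CoxeterSystem M W)
    (k : Type) [Field k] (q : k) (H : Type) [Ring H] [Algebra k H]
    (T : Module.Basis W k H)
    (hone : T 1 = 1)
    (hbraid : ∀ v w : W,
      cs.length (v * w) = cs.length v + cs.length w → T v * T w = T (v * w))
    (hquad : ∀ i : B,
      T (cs.simple i) * T (cs.simple i) = (q - 1) • T (cs.simple i) + q • (1 : H))
    (w₀ : W) (hw₀ : ∀ w : W, cs.length w ≤ cs.length w₀) :
    (∀ w : W, T.repr (T w * T (w⁻¹ * w₀)) w₀ = 1) ∧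
      (∀ v w : W, ¬ BruhatLE cs w v → T.repr (T v * T (w⁻¹ * w₀)) w₀ = 0) ∧
      IsUnit (Matrix.of fun v w : W => T.repr (T v * T (w⁻¹ * w₀)) w₀) ∧
      (∀ a : H, (∀ b : H, T.repr (a * b) w₀ = 0) → a = 0) ∧
      (∀ b : H, (∀ a : H, T.repr (a * b) w₀ = 0) → b = 0) :=
  stmt13_general cs k q H T hbraid hquad w₀ hw₀
end

section
/- Let Φ be a finite root system with positive roots Φ⁺ in a real vector space, and for x in the coweight space define ℓ(x) = Σ_{α ∈ Φ⁺} |⟨x, α⟩|. Then for x, x' one has ℓ(x + x') = ℓ(x) + ℓ(x') if and only if x and x' lie in a common closed Weyl chamber (i.e., there exists a Weyl group element w such that ⟨w⁻¹x, α⟩ ≥ 0 and ⟨w⁻¹x', α⟩ ≥ 0 for all α ∈ Φ⁺). -/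
lemma aux_inv (V : Type) [AddCommGroup V] [Module ℝ V]
    (Φpos : Finset (V →ₗ[ℝ] ℝ))
    (hdisj : ∀ α ∈ Φpos, -α ∉ Φpos)
    (u : V ≃ₗ[ℝ] V)
    (hu : ∀ α ∈ Φpos, α ∘ₗ (u : V →ₗ[ℝ] V) ∈ Φpos ∨ -(α ∘ₗ (u : V →ₗ[ℝ] V)) ∈ Φpos)
    (hu' : ∀ α ∈ Φpos, α ∘ₗ (u.symm : V →ₗ[ℝ] V) ∈ Φpos ∨
      -(α ∘ₗ (u.symm : V →ₗ[ℝ] V)) ∈ Φpos)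
    (v : V) :
    ∑ α ∈ Φpos, |α (u v)| = ∑ α ∈ Φpos, |α v| := by
  classical
  refine Finset.sum_nbij'
    (fun α => if α ∘ₗ (u : V →ₗ[ℝ] V) ∈ Φpos then α ∘ₗ (u : V →ₗ[ℝ] V)
      else -(α ∘ₗ (u : V →ₗ[ℝ] V)))
    (fun β => if β ∘ₗ (u.symm : V →ₗ[ℝ] V) ∈ Φpos then β ∘ₗ (u.symm : V →ₗ[ℝ] V)
      else -(β ∘ₗ (u.symm : V →ₗ[ℝ] V))) ?_ ?_ ?_ ?_ ?_
  · intro α hα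
    rcases hu α hα with h | h
    · simpa [h] using h
    · by_cases h2 : α ∘ₗ (u : V →ₗ[ℝ] V) ∈ Φpos
      · simpa [h2] using h2
      · simpa [h2] using h
  · intro β hβ
    rcases hu' β hβ with h | h
    · simpa [h] using h
    · by_cases h2 : β ∘ₗ (u.symm : V →ₗ[ℝ] V) ∈ Φpos
      · simpa [h2] using h2
      · simpa [h2] using h
  · intro α hα
    have e1 : (α ∘ₗ (u : V →ₗ[ℝ] V)) ∘ₗ (u.symm : V →ₗ[ℝ] V) = α := by
      ext z; simp
    by_cases h : α ∘ₗ (u : V →ₗ[ℝ] V) ∈ Φpos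
    · simp [h, e1, hα]
    · have e2 : (-(α ∘ₗ (u : V →ₗ[ℝ] V))) ∘ₗ (u.symm : V →ₗ[ℝ] V) = -α := by
        ext z; simp
      have : -α ∉ Φpos := hdisj α hα
      simp [h, e2, this]
  · intro β hβ
    have e1 : (β ∘ₗ (u.symm : V →ₗ[ℝ] V)) ∘ₗ (u : V →ₗ[ℝ] V) = β := by
      ext z; simp
    by_cases h : β ∘ₗ (u.symm : V →ₗ[ℝ] V) ∈ Φpos
    · simp [h, e1, hβ]
    · have e2 : (-(β ∘ₗ (u.symm : V →ₗ[ℝ] V))) ∘ₗ (u : V →ₗ[ℝ] V) = -β := by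
        ext z; simp
      have : -β ∉ Φpos := hdisj β hβ
      simp [h, e2, this]
  · intro α hα
    by_cases h : α ∘ₗ (u : V →ₗ[ℝ] V) ∈ Φpos <;> simp [h, abs_neg]

/-- let `Φ⁺` be the positive roots of a finite root system (linear
functionals on the coweight space `V`), `W₀` the Weyl group (acting on `V`, permuting the
roots up to sign, and acting transitively on the Weyl chambers, i.e. every vector can be
moved into the dominant chamber), and `ℓ(x) = Σ_{α∈Φ⁺} |⟨x,α⟩|`.  Then
`ℓ(x + x') = ℓ(x) + ℓ(x')` if and only if `x` and `x'` lie in a common closed Weyl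
chamber, i.e. there is `w ∈ W₀` with `⟨w⁻¹x, α⟩ ≥ 0` and `⟨w⁻¹x', α⟩ ≥ 0` for all
`α ∈ Φ⁺`. -/
theorem stmt15 (V : Type) [AddCommGroup V] [Module ℝ V]
    (Φpos : Finset (V →ₗ[ℝ] ℝ))
    (hdisj : ∀ α ∈ Φpos, -α ∉ Φpos)
    (W₀ : Subgroup (V ≃ₗ[ℝ] V))
    (hW : ∀ w ∈ W₀, ∀ α ∈ Φpos,
      α ∘ₗ ((w : V ≃ₗ[ℝ] V) : V →ₗ[ℝ] V) ∈ Φpos ∨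
        -(α ∘ₗ ((w : V ≃ₗ[ℝ] V) : V →ₗ[ℝ] V)) ∈ Φpos)
    (htrans : ∀ v : V, ∃ w ∈ W₀, ∀ α ∈ Φpos, 0 ≤ α (w⁻¹ v))
    (x x' : V) :
    (∑ α ∈ Φpos, |α (x + x')|) = (∑ α ∈ Φpos, |α x|) + (∑ α ∈ Φpos, |α x'|) ↔
      ∃ w ∈ W₀, (∀ α ∈ Φpos, 0 ≤ α (w⁻¹ x)) ∧ ∀ α ∈ Φpos, 0 ≤ α (w⁻¹ x') := by
  classical
  have inv_sum : ∀ w ∈ W₀, ∀ v : V, ∑ α ∈ Φpos, |α (w v)| = ∑ α ∈ Φpos, |α v| := by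
    intro w hw v
    exact aux_inv V Φpos hdisj w (hW w hw) (hW w⁻¹ (inv_mem hw)) v
  constructor
  · intro heq
    obtain ⟨w, hwW, hdom⟩ := htrans (x + x')
    set y := w⁻¹ x with hy
    set y' := w⁻¹ x' with hy'
    have hxy : x = w y := (w.apply_symm_apply x).symm
    have hxy' : x' = w y' := (w.apply_symm_apply x').symm
    have hsum : ∑ α ∈ Φpos, |α (y + y')| = (∑ α ∈ Φpos, |α y|) + ∑ α ∈ Φpos, |α y'| := by
      have h1 : ∑ α ∈ Φpos, |α (y + y')| = ∑ α ∈ Φpos, |α (x + x')| := by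
        rw [← inv_sum w hwW (y + y')]
        congr 1
        rw [map_add, ← hxy, ← hxy']
      have h2 := inv_sum w hwW y
      have h3 := inv_sum w hwW y'
      rw [← hxy] at h2; rw [← hxy'] at h3
      rw [h1, heq, ← h2, ← h3]
    have hterm : ∀ α ∈ Φpos, |α (y + y')| = |α y| + |α y'| := by
      have hle : ∀ α ∈ Φpos, |α (y + y')| ≤ |α y| + |α y'| := by
        intro α hα; rw [map_add]; exact abs_add_le _ _
      intro α hα
      by_contra hne
      have hlt : |α (y + y')| < |α y| + |α y'| := lt_of_le_of_ne (hle α hα) hne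
      have hslt : ∑ α ∈ Φpos, |α (y + y')| < ∑ α ∈ Φpos, (|α y| + |α y'|) :=
        Finset.sum_lt_sum (fun i hi => hle i hi) ⟨α, hα, hlt⟩
      rw [Finset.sum_add_distrib] at hslt
      linarith [hsum]
    have hpos : ∀ α ∈ Φpos, 0 ≤ α y ∧ 0 ≤ α y' := by
      intro α hα
      have h0 : (0:ℝ) ≤ α (y + y') := by
        rw [hy, hy', ← map_add]; exact hdom α hα
      rw [map_add] at h0
      have ht := hterm α hα
      rw [map_add] at ht
      have habs : α y + α y' = |α y| + |α y'| := by rw [← ht, abs_of_nonneg h0]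
      constructor <;>
        linarith [le_abs_self (α y), le_abs_self (α y'), abs_nonneg (α y), abs_nonneg (α y')]
    exact ⟨w, hwW, fun α hα => (hpos α hα).1, fun α hα => (hpos α hα).2⟩
  · rintro ⟨w, hwW, hd, hd'⟩
    set y := w⁻¹ x with hy
    set y' := w⁻¹ x' with hy'
    have hxy : x = w y := (w.apply_symm_apply x).symm
    have hxy' : x' = w y' := (w.apply_symm_apply x').symm
    have h1 : ∑ α ∈ Φpos, |α (x + x')| = ∑ α ∈ Φpos, |α (y + y')| := by
      rw [hxy, hxy', ← map_add]
      exact inv_sum w hwW (y + y')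
    have h2 : ∑ α ∈ Φpos, |α x| = ∑ α ∈ Φpos, |α y| := by rw [hxy]; exact inv_sum w hwW y
    have h3 : ∑ α ∈ Φpos, |α x'| = ∑ α ∈ Φpos, |α y'| := by rw [hxy']; exact inv_sum w hwW y'
    rw [h1, h2, h3, ← Finset.sum_add_distrib]
    refine Finset.sum_congr rfl fun α hα => ?_
    rw [map_add, abs_of_nonneg (hd α hα), abs_of_nonneg (hd' α hα),
      abs_of_nonneg (add_nonneg (hd α hα) (hd' α hα))]
end
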